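/- arXiv:1801.00137 — 2 statements merged into one kernel-verified Lean document; each statement's English description precedes it below -/
import Mathlib

section
/- Consider ω̄ ∈ ℝ^n, b̄ ∈ ℝ^n, P̄ ∈ ℝ^n, λ̄ ∈ ℝ, u ∈ ℝ^{n−1}, μ̄_b, μ̄_g ∈ ℝ^n, ρ > 0, σ ∈ ℝ satisfying the equilibrium conditions: D_tᵀω̄ = 0; 0 = −D_t u − Aω̄ + P̄ − P_d; 0 = P̄ − g(b̄) + μ̄_b; 0 = 1λ̄ − b̄ + ρ 1 1ᵀ(P_d − P̄) − σ²ω̄ + μ̄_g; 0 = 1ᵀ(P_d − P̄); b̄ ≥ 0, μ̄_b ≥ 0, b̄ᵀμ̄_b = 0; P̄ ≥ 0, μ̄_g ≥ 0, P̄ᵀμ̄_g = 0. Suppose moreover that P̄_i > 0 for at least two distinct indices i. Then ω̄ = 0, P̄ is the unique minimizer of the ED problem, and b̄ is an efficient Nash equilibrium of the inelastic electricity market game. -/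
/-
At an equilibrium the frequency deviation is a constant vector (it lies in the kernel of `D_tᵀ`), and
summing the swing equation over all buses kills the line flows `D_t u` and, by power balance, the
generation surplus; so `∑ A_i ω_i = 0` and hence `ω = 0`. The bid equation then reads
`b̄ = λ̄ 1 + μ̄_g`, and complementarity for `μ̄_b` shows that each `P̄_i = g_i(b̄_i)` is a best
response to its own bid. The first-order conditions of these profit maximizations make
`(P̄, λ̄, C'(P̄) - λ̄)` a KKT triple of the ED problem, which by strict convexity has `P̄` as its unique
minimizer. Finally, since two generators produce at the clearing price `λ̄`, a generator that raises
its bid is undercut by another one and dispatched at zero, so no deviation pays.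
-/

open Finset

noncomputable section

/-- Feasible production profiles for the dispatch problems:
power balance `1ᵀP = 1ᵀP_d` and componentwise nonnegativity. -/
def Feasible {n : ℕ} (Pd P : Fin n → ℝ) : Prop :=
  (∑ i, P i = ∑ i, Pd i) ∧ ∀ i, 0 ≤ P i

/-- `P` is an optimizer of the ISO problem for bids `b`:
it minimizes `bᵀP` over the feasible set. -/
def IsISOOpt {n : ℕ} (Pd b P : Fin n → ℝ) : Prop :=
  Feasible Pd P ∧ ∀ Q, Feasible Pd Q → ∑ i, b i * P i ≤ ∑ i, b i * Q i

/-- `P` is a minimizer of the economic dispatch (ED) problem. -/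
def IsEDOpt {n : ℕ} (C : Fin n → ℝ → ℝ) (Pd P : Fin n → ℝ) : Prop :=
  Feasible Pd P ∧ ∀ Q, Feasible Pd Q → ∑ i, C i (P i) ≤ ∑ i, C i (Q i)

/-- `(P, lam, mu)` is a KKT triple for the ED problem, with `C' i` the marginal
cost of generator `i`. -/
def IsKKT {n : ℕ} (C' : Fin n → ℝ → ℝ) (Pd P : Fin n → ℝ) (lam : ℝ)
    (mu : Fin n → ℝ) : Prop :=
  (∀ i, C' i (P i) = lam + mu i) ∧ (∑ i, P i = ∑ i, Pd i) ∧
    (∀ i, 0 ≤ P i) ∧ (∀ i, 0 ≤ mu i) ∧ (∑ i, P i * mu i = 0)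

/-- Payoff of a generator with cost `Ci` bidding `bi` and producing `Pi`. -/
def Payoff (Ci : ℝ → ℝ) (bi Pi : ℝ) : ℝ := Pi * bi - Ci Pi

/-- `bstar` is a Nash equilibrium of the inelastic electricity market game. -/
def IsNash {n : ℕ} (C : Fin n → ℝ → ℝ) (Pd bstar : Fin n → ℝ) : Prop :=
  (∀ i, 0 ≤ bstar i) ∧
  ∃ P0, IsISOOpt Pd bstar P0 ∧
    ∀ i (bi : ℝ), 0 ≤ bi → bi ≠ bstar i →
      ∀ P, IsISOOpt Pd (Function.update bstar i bi) P →
        Payoff (C i) bi (P i) ≤ Payoff (C i) (bstar i) (P0 i)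

/-- `bstar` is an efficient bid: the optimizer of the ED problem is also an
optimizer of the ISO problem for bids `bstar`, and each `Pstar i` maximizes
the profit `P ↦ P * bstar i - C i P` over `P ≥ 0`. -/
def IsEfficientBid {n : ℕ} (C : Fin n → ℝ → ℝ) (Pd bstar : Fin n → ℝ) : Prop :=
  (∀ i, 0 ≤ bstar i) ∧
  ∀ Pstar, IsEDOpt C Pd Pstar →
    IsISOOpt Pd bstar Pstar ∧
      ∀ i, ∀ P, 0 ≤ P → Payoff (C i) (bstar i) P ≤ Payoff (C i) (bstar i) (Pstar i)

/-- Standing assumptions on a generator cost function: continuously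
differentiable with derivative `Cf'`, strongly convex on `[0, ∞)`, and
nonnegative marginal cost at zero. -/
def CostAssumptions (Cf Cf' : ℝ → ℝ) : Prop :=
  (∀ x, HasDerivAt Cf (Cf' x) x) ∧ Continuous Cf' ∧
    (∃ m : ℝ, 0 < m ∧
      ∀ x y, 0 ≤ x → 0 ≤ y → (Cf' x - Cf' y) * (x - y) ≥ m * (x - y) ^ 2) ∧
    0 ≤ Cf' 0

/-- `P` is the unique maximizer of the profit `Q ↦ β * Q - Cf Q` over `Q ≥ 0`. -/
def IsUniqueArgmaxProfit (Cf : ℝ → ℝ) (β P : ℝ) : Prop :=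
  0 ≤ P ∧ (∀ Q, 0 ≤ Q → β * Q - Cf Q ≤ β * P - Cf P) ∧
    ∀ Q, 0 ≤ Q → (∀ R, 0 ≤ R → β * R - Cf R ≤ β * Q - Cf Q) → Q = P

open Matrix

open Set

lemma mul_eq_zero_of_sum_mul_eq_zero {ι : Type*} [Fintype ι] {x y : ι → ℝ}
    (hx : ∀ i, 0 ≤ x i) (hy : ∀ i, 0 ≤ y i) (h : ∑ i, x i * y i = 0) (i : ι) :
    x i * y i = 0 :=
  (sum_eq_zero_iff_of_nonneg fun k _ => mul_nonneg (hx k) (hy k)).1 h i (Finset.mem_univ i)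

lemma sum_mulVec_eq_zero {m k : Type*} [Fintype m] [Fintype k] (D : Matrix m k ℝ)
    (hD : Dᵀ *ᵥ 1 = 0) (u : k → ℝ) : ∑ i, (D *ᵥ u) i = 0 := by
  rw [← one_dotProduct, dotProduct_mulVec, ← mulVec_transpose, hD, zero_dotProduct]

lemma eq_zero_of_sum_mul_eq_zero_of_const {ι : Type*} [Fintype ι] {A ω : ι → ℝ} {c : ℝ}
    (hA : ∀ i, 0 < A i) (hω : ∀ i, ω i = c) (hsum : ∑ i, A i * ω i = 0) : ω = 0 := by
  funext i
  have hc : (∑ j, A j) * c = 0 := by simpa only [hω, sum_mul] using hsum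
  have hApos : 0 < ∑ j, A j := sum_pos (fun j _ => hA j) ⟨i, Finset.mem_univ i⟩
  rw [hω i, (mul_eq_zero.1 hc).resolve_left hApos.ne', Pi.zero_apply]

namespace CostAssumptions

variable {Cf Cf' : ℝ → ℝ} (h : CostAssumptions Cf Cf')
include h

lemma deriv_strictMonoOn : StrictMonoOn Cf' (Ici 0) := by
  intro x hx y hy hxy
  obtain ⟨m, hm, hsc⟩ := h.2.2.1
  have := hsc y x hy hx
  nlinarith [mul_pos hm (pow_pos (sub_pos.2 hxy) 2)]

lemma strictConvexOn : StrictConvexOn ℝ (Ici 0) Cf :=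
  StrictMonoOn.strictConvexOn_of_deriv (convex_Ici 0)
    (fun x _ => (h.1 x).continuousAt.continuousWithinAt)
    (by rw [interior_Ici, deriv_eq h.1]; exact h.deriv_strictMonoOn.mono Ioi_subset_Ici_self)

lemma add_deriv_mul_sub_lt {x y : ℝ} (hx : 0 ≤ x) (hy : 0 ≤ y) (hne : x ≠ y) :
    Cf x + Cf' x * (y - x) < Cf y := by
  rcases hne.lt_or_gt with hxy | hyx
  · have := h.strictConvexOn.lt_slope_of_hasDerivAt hx hy hxy (h.1 x)
    rw [slope_def_field, lt_div_iff₀ (sub_pos.2 hxy)] at this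
    linarith
  · have := h.strictConvexOn.slope_lt_of_hasDerivAt hy hx hyx (h.1 x)
    rw [slope_def_field, div_lt_iff₀ (sub_pos.2 hyx)] at this
    linarith

lemma add_deriv_mul_sub_le {x y : ℝ} (hx : 0 ≤ x) (hy : 0 ≤ y) :
    Cf x + Cf' x * (y - x) ≤ Cf y := by
  rcases eq_or_ne x y with rfl | hne
  · simp
  · exact (h.add_deriv_mul_sub_lt hx hy hne).le

lemma eq_zero_of_isUniqueArgmaxProfit_zero {P : ℝ} (hP : IsUniqueArgmaxProfit Cf 0 P) :
    P = 0 :=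
  (hP.2.2 0 le_rfl fun R hR => by
    nlinarith [h.add_deriv_mul_sub_le le_rfl hR, mul_nonneg h.2.2.2 hR]).symm

lemma eq_of_complementary {g : ℝ → ℝ} (hg : ∀ β, IsUniqueArgmaxProfit Cf β (g β))
    {b μ P : ℝ} (hb : 0 ≤ b) (hμ : 0 ≤ μ) (hcomp : b * μ = 0) (hP : 0 ≤ P)
    (heq : P = g b - μ) : P = g b := by
  rcases hb.eq_or_lt with rfl | hb
  · have := h.eq_zero_of_isUniqueArgmaxProfit_zero (hg 0)
    linarith
  · rw [heq, (mul_eq_zero.1 hcomp).resolve_left hb.ne', sub_zero]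

end CostAssumptions

lemma IsUniqueArgmaxProfit.isMaxOn_payoff {Cf : ℝ → ℝ} {β P : ℝ}
    (h : IsUniqueArgmaxProfit Cf β P) : IsMaxOn (Payoff Cf β) (Ici 0) P :=
  isMaxOn_iff.2 fun Q hQ => by simpa only [Payoff, mul_comm] using h.2.1 Q hQ

section FirstOrderConditions

variable {Cf : ℝ → ℝ} {c β P : ℝ}

lemma hasDerivAt_payoff (hd : HasDerivAt Cf c P) (β : ℝ) :
    HasDerivAt (Payoff Cf β) (β - c) P :=
  (hasDerivAt_mul_const β).sub hd

lemma le_of_isMaxOn_payoff (hd : HasDerivAt Cf c P) (hP : 0 ≤ P)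
    (hmax : IsMaxOn (Payoff Cf β) (Ici 0) P) : β ≤ c := by
  have hcone : (1 : ℝ) ∈ posTangentConeAt (Ici 0) P :=
    mem_posTangentConeAt_of_segment_subset <| by
      rw [segment_eq_Icc (by linarith)]
      exact Icc_subset_Ici_iff (by linarith) |>.2 hP
  have := hmax.localize.hasFDerivWithinAt_nonpos
    (hasDerivAt_payoff hd β).hasDerivWithinAt.hasFDerivWithinAt hcone
  simp only [ContinuousLinearMap.toSpanSingleton_apply, one_smul] at this
  linarith

lemma eq_of_isMaxOn_payoff (hd : HasDerivAt Cf c P) (hP : 0 < P)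
    (hmax : IsMaxOn (Payoff Cf β) (Ici 0) P) : β = c :=
  sub_eq_zero.1 <| (hmax.isLocalMax (Ici_mem_nhds hP)).hasDerivAt_eq_zero (hasDerivAt_payoff hd β)

end FirstOrderConditions

section Dispatch

variable {n : ℕ} {Pd b P : Fin n → ℝ}

-- Otherwise moving the whole production of `i` to the cheaper `j` would lower the ISO cost.
lemma IsISOOpt.eq_zero_of_lt (h : IsISOOpt Pd b P) {i j : Fin n} (hji : j ≠ i)
    (hlt : b j < b i) : P i = 0 := by
  set Q := P + Pi.single j (P i) - Pi.single i (P i)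
  have hQ : Feasible Pd Q := by
    refine ⟨by simpa [Q, sum_add_distrib, sum_sub_distrib] using h.1.1, fun k => ?_⟩
    rcases eq_or_ne k i with rfl | hki
    · simp [Q, hji]
    · have := h.1.2 k
      have := h.1.2 i
      simp only [Q, Pi.sub_apply, Pi.add_apply, Pi.single_apply, hki, if_false]
      split_ifs <;> linarith
  have hcost : ∑ k, b k * Q k = ∑ k, b k * P k + (b j - b i) * P i := by
    simp only [Q, Pi.sub_apply, Pi.add_apply, mul_sub, mul_add, sum_add_distrib,
      sum_sub_distrib, Pi.single_apply, mul_ite, mul_zero, sum_ite_eq', Finset.mem_univ, if_true]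
    ring
  have := h.2 Q hQ
  nlinarith [h.1.2 i]

lemma isISOOpt_of_complementary {mu : Fin n → ℝ} {lam : ℝ} (hP : Feasible Pd P)
    (hb : ∀ i, b i = lam + mu i) (hmu : ∀ i, 0 ≤ mu i) (hcomp : ∑ i, P i * mu i = 0) :
    IsISOOpt Pd b P := by
  have hcost : ∀ R : Fin n → ℝ, ∑ i, b i * R i = lam * ∑ i, R i + ∑ i, mu i * R i := fun R => by
    simp only [hb, add_mul, sum_add_distrib, mul_sum]
  refine ⟨hP, fun Q hQ => ?_⟩
  have hmuQ : 0 ≤ ∑ i, mu i * Q i := sum_nonneg fun i _ => mul_nonneg (hmu i) (hQ.2 i)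
  have hmuP : ∑ i, mu i * P i = 0 := by simpa only [mul_comm] using hcomp
  rw [hcost, hcost, hP.1, hQ.1, hmuP]
  linarith

lemma exists_ne_le_of_complementary {mu : Fin n → ℝ} {lam : ℝ} (hb : ∀ i, b i = lam + mu i)
    (hmu : ∀ i, 0 ≤ mu i) (hcomp : ∀ i, P i * mu i = 0)
    (htwo : ∃ i j, i ≠ j ∧ 0 < P i ∧ 0 < P j) (i : Fin n) : ∃ j ≠ i, b j ≤ b i := by
  obtain ⟨j, hji, hj⟩ : ∃ j ≠ i, 0 < P j := by
    obtain ⟨a, a', haa', ha, ha'⟩ := htwo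
    by_cases hai : a = i
    · exact ⟨a', hai ▸ haa'.symm, ha'⟩
    · exact ⟨a, hai, ha⟩
  refine ⟨j, hji, ?_⟩
  rw [hb, hb, (mul_eq_zero.1 (hcomp j)).resolve_left hj.ne']
  linarith [hmu i]

lemma isNash_of_isMaxOn_payoff {C : Fin n → ℝ → ℝ} (hb : ∀ i, 0 ≤ b i) (hP : IsISOOpt Pd b P)
    (hmax : ∀ i, IsMaxOn (Payoff (C i) (b i)) (Ici 0) (P i))
    (hlow : ∀ i, ∃ j ≠ i, b j ≤ b i) : IsNash C Pd b := by
  refine ⟨hb, P, hP, fun i bi _ hne Q hQ => ?_⟩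
  have hQi := hQ.1.2 i
  rcases hne.lt_or_gt with hlt | hgt
  · calc Payoff (C i) bi (Q i) ≤ Payoff (C i) (b i) (Q i) :=
          sub_le_sub_right (mul_le_mul_of_nonneg_left hlt.le hQi) _
      _ ≤ Payoff (C i) (b i) (P i) := hmax i hQi
  · obtain ⟨j, hji, hj⟩ := hlow i
    have hQi0 : Q i = 0 := hQ.eq_zero_of_lt hji <| by
      simpa [Function.update_of_ne hji] using hj.trans_lt hgt
    calc Payoff (C i) bi (Q i) = Payoff (C i) (b i) 0 := by simp [Payoff, hQi0]
      _ ≤ Payoff (C i) (b i) (P i) := hmax i self_mem_Ici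

end Dispatch

namespace IsKKT

variable {n : ℕ} {C C' : Fin n → ℝ → ℝ} {Pd P mu : Fin n → ℝ} {lam : ℝ}

lemma isISOOpt (h : IsKKT C' Pd P lam mu) : IsISOOpt Pd (fun i => C' i (P i)) P :=
  isISOOpt_of_complementary ⟨h.2.1, h.2.2.1⟩ h.1 h.2.2.2.1 h.2.2.2.2

lemma sum_cost_lt (hC : ∀ i, CostAssumptions (C i) (C' i)) (h : IsKKT C' Pd P lam mu)
    {Q : Fin n → ℝ} (hQ : Feasible Pd Q) (hne : Q ≠ P) :
    ∑ i, C i (P i) < ∑ i, C i (Q i) := by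
  obtain ⟨k, hk⟩ := Function.ne_iff.1 hne
  have htangent : ∑ i, (C i (P i) + C' i (P i) * (Q i - P i)) < ∑ i, C i (Q i) :=
    sum_lt_sum (fun i _ => (hC i).add_deriv_mul_sub_le (h.2.2.1 i) (hQ.2 i))
      ⟨k, Finset.mem_univ k, (hC k).add_deriv_mul_sub_lt (h.2.2.1 k) (hQ.2 k) (Ne.symm hk)⟩
  have hmarginal := h.isISOOpt.2 Q hQ
  simp only [sum_add_distrib, mul_sub, sum_sub_distrib] at htangent
  linarith

lemma isEDOpt (hC : ∀ i, CostAssumptions (C i) (C' i)) (h : IsKKT C' Pd P lam mu) :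
    IsEDOpt C Pd P := by
  refine ⟨⟨h.2.1, h.2.2.1⟩, fun Q hQ => ?_⟩
  rcases eq_or_ne Q P with rfl | hne
  · exact le_rfl
  · exact (h.sum_cost_lt hC hQ hne).le

lemma eq_of_isEDOpt (hC : ∀ i, CostAssumptions (C i) (C' i)) (h : IsKKT C' Pd P lam mu)
    {Q : Fin n → ℝ} (hQ : IsEDOpt C Pd Q) : Q = P := by
  by_contra hne
  exact (h.sum_cost_lt hC hQ.1 hne).not_ge (hQ.2 P ⟨h.2.1, h.2.2.1⟩)

end IsKKT

lemma isKKT_of_isMaxOn_payoff {n : ℕ} {C C' : Fin n → ℝ → ℝ}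
    (hd : ∀ i x, HasDerivAt (C i) (C' i x) x) {Pd P b mu : Fin n → ℝ} {lam : ℝ}
    (hP : Feasible Pd P) (hmax : ∀ i, IsMaxOn (Payoff (C i) (b i)) (Ici 0) (P i))
    (hb : ∀ i, b i = lam + mu i) (hmu : ∀ i, 0 ≤ mu i) (hcomp : ∀ i, P i * mu i = 0) :
    IsKKT C' Pd P lam (fun i => C' i (P i) - lam) := by
  have hle : ∀ i, b i ≤ C' i (P i) := fun i =>
    le_of_isMaxOn_payoff (hd i _) (hP.2 i) (hmax i)
  have hslack : ∀ i, P i * (C' i (P i) - lam) = 0 := by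
    intro i
    rcases (hP.2 i).eq_or_lt with hzero | hpos
    · rw [← hzero, zero_mul]
    · rw [← eq_of_isMaxOn_payoff (hd i _) hpos (hmax i), hb i,
        (mul_eq_zero.1 (hcomp i)).resolve_left hpos.ne']
      ring
  exact ⟨fun i => by ring, hP.1, hP.2, fun i => by linarith [hle i, hb i, hmu i],
    sum_eq_zero fun i _ => hslack i⟩

theorem equilibria_are_efficient_general {n : ℕ}
    (C C' : Fin n → ℝ → ℝ) (hC : ∀ i, CostAssumptions (C i) (C' i))
    (g : Fin n → ℝ → ℝ) (hg : ∀ i β, IsUniqueArgmaxProfit (C i) β (g i β))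
    (Pd : Fin n → ℝ)
    (Dt : Matrix (Fin n) (Fin (n - 1)) ℝ)
    (hker : ∀ w : Fin n → ℝ, Dtᵀ.mulVec w = 0 ↔ ∃ c : ℝ, ∀ i, w i = c)
    (A : Fin n → ℝ) (hA : ∀ i, 0 < A i)
    (ρ : ℝ) (σ : ℝ)
    (ω bbar Pbar : Fin n → ℝ) (lam : ℝ) (u : Fin (n - 1) → ℝ)
    (μb μg : Fin n → ℝ)
    -- equilibrium conditions
    (h1 : Dtᵀ.mulVec ω = 0)
    (h2 : ∀ i, 0 = -(Dt.mulVec u) i - A i * ω i + Pbar i - Pd i)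
    (h3 : ∀ i, (0 : ℝ) = Pbar i - g i (bbar i) + μb i)
    (h4 : ∀ i, (0 : ℝ) = lam - bbar i + ρ * (∑ j, (Pd j - Pbar j))
        - σ ^ 2 * ω i + μg i)
    (h5 : (0 : ℝ) = ∑ i, (Pd i - Pbar i))
    (hbbar : ∀ i, 0 ≤ bbar i) (hμb : ∀ i, 0 ≤ μb i)
    (hcompb : ∑ i, bbar i * μb i = 0)
    (hPbar : ∀ i, 0 ≤ Pbar i) (hμg : ∀ i, 0 ≤ μg i)
    (hcompg : ∑ i, Pbar i * μg i = 0)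
    (htwo : ∃ i j, i ≠ j ∧ 0 < Pbar i ∧ 0 < Pbar j) :
    ω = 0 ∧
    (IsEDOpt C Pd Pbar ∧ ∀ Q, IsEDOpt C Pd Q → Q = Pbar) ∧
    (IsEfficientBid C Pd bbar ∧ IsNash C Pd bbar) := by
  have hfeas : Feasible Pd Pbar := ⟨by rw [sum_sub_distrib] at h5; linarith, hPbar⟩
  have hω : ω = 0 := by
    obtain ⟨c, hc⟩ := (hker ω).1 h1
    refine eq_zero_of_sum_mul_eq_zero_of_const hA hc ?_
    have hflow := sum_mulVec_eq_zero Dt ((hker 1).2 ⟨1, fun _ => rfl⟩) u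
    have hswing := sum_eq_zero fun i (_ : i ∈ Finset.univ) => (h2 i).symm
    simp only [sum_add_distrib, sum_sub_distrib, sum_neg_distrib] at hswing
    linarith [hfeas.1]
  have hbid : ∀ i, bbar i = lam + μg i := fun i => by
    have := h4 i
    rw [← h5, hω, Pi.zero_apply] at this
    linarith
  have hslackg := mul_eq_zero_of_sum_mul_eq_zero hPbar hμg hcompg
  have hmax : ∀ i, IsMaxOn (Payoff (C i) (bbar i)) (Ici 0) (Pbar i) := fun i => by
    rw [(hC i).eq_of_complementary (hg i) (hbbar i) (hμb i)
      (mul_eq_zero_of_sum_mul_eq_zero hbbar hμb hcompb i) (hPbar i) (by linarith [h3 i])]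
    exact (hg i _).isMaxOn_payoff
  have hKKT := isKKT_of_isMaxOn_payoff (fun i => (hC i).1) hfeas hmax hbid hμg hslackg
  have hISO := isISOOpt_of_complementary hfeas hbid hμg hcompg
  have hunique : ∀ Q, IsEDOpt C Pd Q → Q = Pbar := fun Q hQ => hKKT.eq_of_isEDOpt hC hQ
  refine ⟨hω, ⟨hKKT.isEDOpt hC, hunique⟩, ⟨hbbar, fun P hP => ?_⟩,
    isNash_of_isMaxOn_payoff hbbar hISO hmax
      (exists_ne_le_of_complementary hbid hμg hslackg htwo)⟩
  rw [hunique P hP]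
  exact ⟨hISO, fun i Q hQ => hmax i hQ⟩

/-- Any equilibrium of the interconnection of the
ISO–generator bidding dynamics with the power network swing dynamics, having
at least two strictly producing generators, is efficient: the frequency
deviation is zero, the generation profile is the unique minimizer of the ED
problem, and the bid profile is an efficient Nash equilibrium. -/
theorem equilibria_are_efficient {n : ℕ} (hn : 2 ≤ n)
    (C C' : Fin n → ℝ → ℝ) (hC : ∀ i, CostAssumptions (C i) (C' i))
    (g : Fin n → ℝ → ℝ) (hg : ∀ i β, IsUniqueArgmaxProfit (C i) β (g i β))
    (Pd : Fin n → ℝ) (hPd : ∀ i, 0 ≤ Pd i) (hPdpos : 0 < ∑ i, Pd i)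
    (Dt : Matrix (Fin n) (Fin (n - 1)) ℝ)
    (hker : ∀ w : Fin n → ℝ, Dtᵀ.mulVec w = 0 ↔ ∃ c : ℝ, ∀ i, w i = c)
    (A : Fin n → ℝ) (hA : ∀ i, 0 < A i)
    (ρ : ℝ) (hρ : 0 < ρ) (σ : ℝ)
    (ω bbar Pbar : Fin n → ℝ) (lam : ℝ) (u : Fin (n - 1) → ℝ)
    (μb μg : Fin n → ℝ)
    -- equilibrium conditions
    (h1 : Dtᵀ.mulVec ω = 0)
    (h2 : ∀ i, 0 = -(Dt.mulVec u) i - A i * ω i + Pbar i - Pd i)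
    (h3 : ∀ i, (0 : ℝ) = Pbar i - g i (bbar i) + μb i)
    (h4 : ∀ i, (0 : ℝ) = lam - bbar i + ρ * (∑ j, (Pd j - Pbar j))
        - σ ^ 2 * ω i + μg i)
    (h5 : (0 : ℝ) = ∑ i, (Pd i - Pbar i))
    (hbbar : ∀ i, 0 ≤ bbar i) (hμb : ∀ i, 0 ≤ μb i)
    (hcompb : ∑ i, bbar i * μb i = 0)
    (hPbar : ∀ i, 0 ≤ Pbar i) (hμg : ∀ i, 0 ≤ μg i)
    (hcompg : ∑ i, Pbar i * μg i = 0)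
    (htwo : ∃ i j, i ≠ j ∧ 0 < Pbar i ∧ 0 < Pbar j) :
    ω = 0 ∧
    (IsEDOpt C Pd Pbar ∧ ∀ Q, IsEDOpt C Pd Q → Q = Pbar) ∧
    (IsEfficientBid C Pd bbar ∧ IsNash C Pd bbar) :=
  equilibria_are_efficient_general C C' hC g hg Pd Dt hker A hA ρ σ ω bbar Pbar lam u μb μg h1 h2 h3
    h4 h5 hbbar hμb hcompb hPbar hμg hcompg htwo
end
end

section
/- Let (P*, λ*, μ*) be the KKT triple for the ED problem. If b* ≥ 0 is an efficient bid, then λ* ≤ b*_i ≤ C_i'(P*_i) for every i; in particular b*_i = λ* for every i with P*_i > 0. -/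
open Finset

noncomputable section

/-!
By convexity of the costs, the KKT triple certifies that `Pstar` solves the ED problem, so
efficiency makes `Pstar` a profit maximizer for every generator and a solution of the ISO problem.
The first-order condition of the profit maximization on `[0, ∞)` gives `bstar i ≤ C' i (Pstar i)`,
with equality when `Pstar i > 0`, where complementary slackness makes `C' i (Pstar i) = lam`.
Finally, some generator `j` is dispatched since the load is positive, and moving its output to
generator `i` cannot lower the ISO objective, so `lam = bstar j ≤ bstar i`.
-/

open Set

lemma monotoneOn_of_mul_sub_nonneg {s : Set ℝ} {g : ℝ → ℝ}
    (h : ∀ x ∈ s, ∀ y ∈ s, 0 ≤ (g x - g y) * (x - y)) : MonotoneOn g s := by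
  intro x hx y hy hxy
  rcases hxy.eq_or_lt with rfl | hlt
  · exact le_rfl
  · exact sub_nonneg.1 <| (mul_nonneg_iff_of_pos_right (sub_pos.2 hlt)).1 (h y hy x hx)

lemma CostAssumptions.convexOn {Cf Cf' : ℝ → ℝ} (h : CostAssumptions Cf Cf') :
    ConvexOn ℝ (Ici 0) Cf := by
  obtain ⟨hderiv, -, ⟨m, hm, hstrong⟩, -⟩ := h
  have hmono : MonotoneOn Cf' (Ici 0) := monotoneOn_of_mul_sub_nonneg fun x hx y hy =>
    (mul_nonneg hm.le (sq_nonneg _)).trans (hstrong x y hx hy)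
  have hderiv_eq : deriv Cf = Cf' := funext fun x => (hderiv x).deriv
  refine MonotoneOn.convexOn_of_deriv (convex_Ici 0)
    (fun x _ => (hderiv x).continuousAt.continuousWithinAt)
    (fun x _ => (hderiv x).differentiableAt.differentiableWithinAt) ?_
  rw [hderiv_eq, interior_Ici]
  exact hmono.mono Ioi_subset_Ici_self

lemma ConvexOn.mul_sub_le_sub_of_hasDerivAt {S : Set ℝ} {f : ℝ → ℝ} {f' x y : ℝ}
    (hf : ConvexOn ℝ S f) (hx : x ∈ S) (hy : y ∈ S) (hderiv : HasDerivAt f f' x) :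
    f' * (y - x) ≤ f y - f x := by
  rcases lt_trichotomy x y with hxy | rfl | hyx
  · have := hf.le_slope_of_hasDerivAt hx hy hxy hderiv
    rwa [slope_def_field, le_div_iff₀ (sub_pos.2 hxy)] at this
  · simp
  · have := hf.slope_le_of_hasDerivAt hy hx hyx hderiv
    rw [slope_def_field, div_le_iff₀ (sub_pos.2 hyx)] at this
    linarith

section Dispatch

variable {n : ℕ} {C : Fin n → ℝ → ℝ} {C' : Fin n → ℝ → ℝ} {Pd P : Fin n → ℝ} {lam : ℝ}
  {mu : Fin n → ℝ}

lemma IsKKT.isEDOpt_s19 (hKKT : IsKKT C' Pd P lam mu) (hconv : ∀ i, ConvexOn ℝ (Ici 0) (C i))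
    (hderiv : ∀ i, HasDerivAt (C i) (C' i (P i)) (P i)) : IsEDOpt C Pd P := by
  obtain ⟨hstat, hbal, hnonneg, hmu, hslack⟩ := hKKT
  refine ⟨⟨hbal, hnonneg⟩, fun Q ⟨hQbal, hQnonneg⟩ => ?_⟩
  have hlin : ∑ i, C' i (P i) * (Q i - P i) = ∑ i, mu i * Q i := by
    simp only [hstat, add_mul, mul_sub, sum_add_distrib, sum_sub_distrib, ← mul_sum, hQbal, hbal,
      mul_comm (mu _) (P _), hslack]
    ring
  have hgrad : ∑ i, C' i (P i) * (Q i - P i) ≤ ∑ i, (C i (Q i) - C i (P i)) :=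
    sum_le_sum fun i _ =>
      (hconv i).mul_sub_le_sub_of_hasDerivAt (hnonneg i) (hQnonneg i) (hderiv i)
  have hpos : 0 ≤ ∑ i, mu i * Q i := sum_nonneg fun i _ => mul_nonneg (hmu i) (hQnonneg i)
  rw [sum_sub_distrib] at hgrad
  linarith

lemma IsKKT.marginal_cost_eq_of_pos (hKKT : IsKKT C' Pd P lam mu) {i : Fin n} (hi : 0 < P i) :
    C' i (P i) = lam := by
  obtain ⟨hstat, -, hnonneg, hmu, hslack⟩ := hKKT
  have hslack_i : P i * mu i = 0 :=
    (sum_eq_zero_iff_of_nonneg fun j _ => mul_nonneg (hnonneg j) (hmu j)).1 hslack i (mem_univ i)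
  rw [hstat, (mul_eq_zero.1 hslack_i).resolve_left hi.ne', add_zero]

lemma Feasible.exists_pos (hP : Feasible Pd P) (hPd : 0 < ∑ i, Pd i) : ∃ j, 0 < P j := by
  obtain ⟨j, -, hj⟩ := exists_lt_of_sum_lt (s := univ) (f := 0) (g := P) <| by
    simpa [hP.1] using hPd
  exact ⟨j, hj⟩

lemma IsISOOpt.bid_le_of_pos {b : Fin n → ℝ} (hP : IsISOOpt Pd b P) {j : Fin n} (hj : 0 < P j)
    (i : Fin n) : b j ≤ b i := by
  obtain ⟨⟨hbal, hnonneg⟩, hopt⟩ := hP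
  set Q : Fin n → ℝ := P + P j • (Pi.single i 1 - Pi.single j 1) with hQ
  have hQfeas : Feasible Pd Q := by
    refine ⟨by simp [hQ, sum_add_distrib, ← mul_sum, sum_sub_distrib, hbal], fun k => ?_⟩
    simp only [hQ, Pi.add_apply, Pi.smul_apply, Pi.sub_apply, Pi.single_apply, smul_eq_mul]
    have := hnonneg k
    split_ifs with hki hkj hkj <;> subst_vars <;> linarith
  have hobj : ∑ k, b k * Q k = ∑ k, b k * P k + P j * (b i - b j) := by
    simp only [hQ, Pi.add_apply, Pi.smul_apply, Pi.sub_apply, Pi.single_apply, smul_eq_mul, mul_add,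
      mul_sub, mul_ite, mul_one, mul_zero, sum_add_distrib, sum_sub_distrib, sum_ite_eq',
      Finset.mem_univ, ↓reduceIte, add_right_inj]
    ring
  have hgain : 0 ≤ P j * (b i - b j) := by linarith [hobj ▸ hopt Q hQfeas]
  exact sub_nonneg.1 ((mul_nonneg_iff_of_pos_left hj).1 hgain)

section Profit

variable {f : ℝ → ℝ} {f' b p : ℝ}

lemma hasDerivAt_payoff_s19 (hf : HasDerivAt f f' p) : HasDerivAt (Payoff f b) (b - f') p :=
  (hasDerivAt_mul_const b).sub hf

lemma le_of_isMaxOn_payoff_s19 (hmax : IsMaxOn (Payoff f b) (Ici 0) p) (hp : 0 ≤ p)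
    (hf : HasDerivAt f f' p) : b ≤ f' := by
  have hcone : (1 : ℝ) ∈ posTangentConeAt (Ici 0) p :=
    mem_posTangentConeAt_of_segment_subset <|
      (convex_Ici 0).segment_subset hp (mem_Ici.2 (by linarith))
  have := hmax.localize.hasFDerivWithinAt_nonpos
    (hasDerivAt_payoff_s19 hf).hasDerivWithinAt.hasFDerivWithinAt hcone
  simpa using this

lemma eq_of_isMaxOn_payoff_s19 (hmax : IsMaxOn (Payoff f b) (Ici 0) p) (hp : 0 < p)
    (hf : HasDerivAt f f' p) : f' = b :=
  (sub_eq_zero.1 ((hmax.isLocalMax (Ici_mem_nhds hp)).hasDerivAt_eq_zero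
    (hasDerivAt_payoff_s19 hf))).symm

end Profit

end Dispatch

theorem efficient_bid_interval_general {n : ℕ}
    (C C' : Fin n → ℝ → ℝ) (hC : ∀ i, CostAssumptions (C i) (C' i))
    (Pd : Fin n → ℝ) (hPdpos : 0 < ∑ i, Pd i)
    (Pstar : Fin n → ℝ) (lam : ℝ) (mu : Fin n → ℝ)
    (hKKT : IsKKT C' Pd Pstar lam mu)
    (bstar : Fin n → ℝ)
    (hEff : IsEfficientBid C Pd bstar) :
    ∀ i, (lam ≤ bstar i ∧ bstar i ≤ C' i (Pstar i)) ∧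
      (0 < Pstar i → bstar i = lam) := by
  have hderiv : ∀ i, HasDerivAt (C i) (C' i (Pstar i)) (Pstar i) := fun i => (hC i).1 _
  have hED : IsEDOpt C Pd Pstar := hKKT.isEDOpt_s19 (fun i => (hC i).convexOn) hderiv
  obtain ⟨hISO, hprofit⟩ := hEff.2 Pstar hED
  have hmax : ∀ i, IsMaxOn (Payoff (C i) (bstar i)) (Ici 0) (Pstar i) := fun i => hprofit i
  have hbid_eq : ∀ i, 0 < Pstar i → bstar i = lam := fun i hi =>
    (eq_of_isMaxOn_payoff_s19 (hmax i) hi (hderiv i)).symm.trans (hKKT.marginal_cost_eq_of_pos hi)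
  obtain ⟨j, hj⟩ := hED.1.exists_pos hPdpos
  intro i
  refine ⟨⟨?_, le_of_isMaxOn_payoff_s19 (hmax i) (hED.1.2 i) (hderiv i)⟩, hbid_eq i⟩
  calc lam = bstar j := (hbid_eq j hj).symm
    _ ≤ bstar i := hISO.bid_le_of_pos hj i

/-- Let `(Pstar, lam, mu)` be the KKT triple for the ED
problem. If `bstar ≥ 0` is an efficient bid, then `lam ≤ bstar i ≤ C' i (Pstar i)`
for every `i`; in particular `bstar i = lam` for every `i` with `Pstar i > 0`. -/
theorem efficient_bid_interval {n : ℕ} (hn : 1 ≤ n)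
    (C C' : Fin n → ℝ → ℝ) (hC : ∀ i, CostAssumptions (C i) (C' i))
    (Pd : Fin n → ℝ) (hPd : ∀ i, 0 ≤ Pd i) (hPdpos : 0 < ∑ i, Pd i)
    (Pstar : Fin n → ℝ) (lam : ℝ) (mu : Fin n → ℝ)
    (hKKT : IsKKT C' Pd Pstar lam mu)
    (bstar : Fin n → ℝ) (hbstar : ∀ i, 0 ≤ bstar i)
    (hEff : IsEfficientBid C Pd bstar) :
    ∀ i, (lam ≤ bstar i ∧ bstar i ≤ C' i (Pstar i)) ∧
      (0 < Pstar i → bstar i = lam) :=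
  efficient_bid_interval_general C C' hC Pd hPdpos Pstar lam mu hKKT bstar hEff
end
end
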